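/- For k ∈ (0,1) and u ∈ (π/2, π) with f_u(u,k) = 0, where f_u(u,k) = sin u·√(1 − k² sin² u) − cos u·(2E(u,k) − F(u,k)), the partial derivative ∂f_u/∂k equals −(√(1 − k² sin² u)·sin u − cos u·F(u,k)) / (2k(1 − k²)) and is strictly negative. -/

import Mathlib

open intervalIntegral

/-- Incomplete elliptic integral of the first kind. -/
noncomputable def ellF (u k : ℝ) : ℝ :=
  ∫ t in (0:ℝ)..u, 1 / Real.sqrt (1 - k ^ 2 * Real.sin t ^ 2)

/-- Incomplete elliptic integral of the second kind. -/
noncomputable def ellE (u k : ℝ) : ℝ :=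
  ∫ t in (0:ℝ)..u, Real.sqrt (1 - k ^ 2 * Real.sin t ^ 2)

/-- The function `f_u(u,k) = sin u·√(1 − k² sin²u) − cos u·(2E(u,k) − F(u,k))`. -/
noncomputable def fu (u k : ℝ) : ℝ :=
  Real.sin u * Real.sqrt (1 - k ^ 2 * Real.sin u ^ 2)
    - Real.cos u * (2 * ellE u k - ellF u k)

/-!
Differentiating under the integral sign, with `Δ(k, t) = √(1 - k² sin² t)`, gives
`∂E/∂k = (E - F)/k` and `∂F/∂k = (∫₀ᵘ Δ⁻³ - F)/k`; the integral of `Δ⁻³` is eliminated through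
`d/dt (k² sin t cos t / Δ) = Δ - (1 - k²)/Δ³`. The resulting expression for `∂f_u/∂k` collapses
to the stated one once `2 cos u · E` is replaced using `f_u = 0`, and its sign follows from
`sin u > 0 > cos u` and `F > 0`.
-/

open Real Set Metric

theorem hasDerivAt_intervalIntegral_of_continuousOn_deriv {E : Type*} [NormedAddCommGroup E]
    [NormedSpace ℝ E] {F F' : ℝ → ℝ → E} {U : Set ℝ} {x₀ a b : ℝ} (hU : IsOpen U)
    (hx₀ : x₀ ∈ U) (hF : ∀ x ∈ U, ContinuousOn (F x) (uIcc a b))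
    (hF' : ContinuousOn (Function.uncurry F') (U ×ˢ uIcc a b))
    (hF_deriv : ∀ x ∈ U, ∀ t ∈ uIcc a b, HasDerivAt (F · t) (F' x t) x) :
    HasDerivAt (fun x => ∫ t in a..b, F x t) (∫ t in a..b, F' x₀ t) x₀ := by
  obtain ⟨ε, hε, hεU⟩ := nhds_basis_closedBall.mem_iff.1 (hU.mem_nhds hx₀)
  have hball : ball x₀ ε ⊆ U := ball_subset_closedBall.trans hεU
  obtain ⟨C, hC⟩ := ((isCompact_closedBall x₀ ε).prod isCompact_uIcc).exists_bound_of_continuousOn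
    (hF'.mono (prod_mono hεU subset_rfl))
  have hF'₀ : ContinuousOn (F' x₀) (uIcc a b) :=
    hF'.comp (Continuous.prodMk_right x₀).continuousOn fun t ht => ⟨hx₀, ht⟩
  refine (intervalIntegral.hasDerivAt_integral_of_dominated_loc_of_deriv_le (bound := fun _ => C)
    (ball_mem_nhds x₀ hε) ?_ (hF x₀ hx₀).intervalIntegrable
    ((hF'₀.mono uIoc_subset_uIcc).aestronglyMeasurable measurableSet_uIoc) ?_
    intervalIntegrable_const ?_).2
  · filter_upwards [ball_mem_nhds x₀ hε] with x hx
    exact ((hF x (hball hx)).mono uIoc_subset_uIcc).aestronglyMeasurable measurableSet_uIoc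
  · exact .of_forall fun t ht x hx =>
      hC (x, t) ⟨ball_subset_closedBall hx, uIoc_subset_uIcc ht⟩
  · exact .of_forall fun t ht x hx => hF_deriv x (hball hx) t (uIoc_subset_uIcc ht)

local notation "Δ(" k ", " t ")" => Real.sqrt (1 - k ^ 2 * Real.sin t ^ 2)

section

variable {k : ℝ}

lemma one_sub_sq_mul_sin_sq_pos (hk : k ^ 2 < 1) (t : ℝ) : 0 < 1 - k ^ 2 * sin t ^ 2 := by
  nlinarith [sin_sq_le_one t, sq_nonneg k]

lemma delta_pos (hk : k ^ 2 < 1) (t : ℝ) : 0 < Δ(k, t) :=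
  sqrt_pos.2 (one_sub_sq_mul_sin_sq_pos hk t)

lemma delta_ne_zero (hk : k ^ 2 < 1) (t : ℝ) : Δ(k, t) ≠ 0 :=
  (delta_pos hk t).ne'

lemma delta_sq (hk : k ^ 2 < 1) (t : ℝ) : Δ(k, t) ^ 2 = 1 - k ^ 2 * sin t ^ 2 :=
  sq_sqrt (one_sub_sq_mul_sin_sq_pos hk t).le

lemma isOpen_sq_lt_one : IsOpen {k : ℝ | k ^ 2 < 1} :=
  isOpen_lt (continuous_pow 2) continuous_const

lemma hasDerivAt_delta_param (hk : k ^ 2 < 1) (t : ℝ) :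
    HasDerivAt (fun m => Δ(m, t)) (-(k * sin t ^ 2) / Δ(k, t)) k := by
  refine ((((hasDerivAt_pow 2 k).mul_const (sin t ^ 2)).const_sub 1).sqrt
    (one_sub_sq_mul_sin_sq_pos hk t).ne').congr_deriv ?_
  field_simp
  ring

lemma hasDerivAt_inv_delta_param (hk : k ^ 2 < 1) (t : ℝ) :
    HasDerivAt (fun m => 1 / Δ(m, t)) (k * sin t ^ 2 / Δ(k, t) ^ 3) k := by
  simp only [one_div]
  refine ((hasDerivAt_delta_param hk t).inv (delta_ne_zero hk t)).congr_deriv ?_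
  field_simp

lemma hasDerivAt_sin_mul_cos_div_delta (hk : k ^ 2 < 1) (t : ℝ) :
    HasDerivAt (fun t => k ^ 2 * sin t * cos t / Δ(k, t))
      (Δ(k, t) - (1 - k ^ 2) / Δ(k, t) ^ 3) t := by
  have hΔ' := ((((hasDerivAt_sin t).fun_pow 2).const_mul (k ^ 2)).const_sub 1).sqrt
    (one_sub_sq_mul_sin_sq_pos hk t).ne'
  refine ((((hasDerivAt_sin t).const_mul (k ^ 2)).mul (hasDerivAt_cos t)).div hΔ'
    (delta_ne_zero hk t)).congr_deriv ?_
  have hΔ := delta_pos hk t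
  field_simp
  norm_num
  linear_combination
    (2 * k ^ 2 * (cos t ^ 2 - sin t ^ 2) - 2 * (Δ(k, t) ^ 2 + 1 - k ^ 2 * sin t ^ 2))
        * delta_sq hk t
      + 2 * k ^ 2 * cos_sq' t

lemma continuous_inv_delta (hk : k ^ 2 < 1) : Continuous fun t => 1 / Δ(k, t) := by
  fun_prop (disch := exact delta_ne_zero hk)

lemma continuous_inv_delta_cube (hk : k ^ 2 < 1) : Continuous fun t => 1 / Δ(k, t) ^ 3 := by
  fun_prop (disch := simp [delta_ne_zero hk])

theorem hasDerivAt_ellE_param (u : ℝ) (hk0 : k ≠ 0) (hk : k ^ 2 < 1) :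
    HasDerivAt (fun m => ellE u m) ((ellE u k - ellF u k) / k) k := by
  refine (hasDerivAt_intervalIntegral_of_continuousOn_deriv (a := 0) (b := u)
    (F := fun m t => Δ(m, t)) (F' := fun m t => -(m * sin t ^ 2) / Δ(m, t))
    isOpen_sq_lt_one hk (fun _ _ => by fun_prop)
    (ContinuousOn.div (by fun_prop) (by fun_prop) fun p hp => delta_ne_zero hp.1 p.2)
    fun m hm t _ => hasDerivAt_delta_param hm t).congr_deriv ?_
  rw [ellE, ellF,
    ← integral_sub ((by fun_prop : Continuous fun t => Δ(k, t)).intervalIntegrable _ _)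
      ((continuous_inv_delta hk).intervalIntegrable _ _),
    ← intervalIntegral.integral_div]
  refine integral_congr fun t _ => ?_
  have hΔ := delta_pos hk t
  field_simp
  linear_combination -delta_sq hk t

lemma integral_inv_delta_cube (u : ℝ) (hk : k ^ 2 < 1) :
    ∫ t in (0 : ℝ)..u, 1 / Δ(k, t) ^ 3
      = (ellE u k - k ^ 2 * sin u * cos u / Δ(k, u)) / (1 - k ^ 2) := by
  have hFTC := integral_eq_sub_of_hasDerivAt (fun t _ => hasDerivAt_sin_mul_cos_div_delta hk t)
    (Continuous.intervalIntegrable (by fun_prop (disch := simp [delta_ne_zero hk])) 0 u)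
  simp only [sin_zero, zero_mul, mul_zero, zero_div, sub_zero] at hFTC
  have hsplit : ∫ t in (0 : ℝ)..u, Δ(k, t) - (1 - k ^ 2) / Δ(k, t) ^ 3
      = ellE u k - (1 - k ^ 2) * ∫ t in (0 : ℝ)..u, 1 / Δ(k, t) ^ 3 := by
    rw [ellE, ← intervalIntegral.integral_const_mul, ← integral_sub
      ((by fun_prop : Continuous fun t => Δ(k, t)).intervalIntegrable _ _)
      (((continuous_inv_delta_cube hk).const_mul _).intervalIntegrable _ _)]
    simp only [mul_one_div]
  have hk' : 1 - k ^ 2 ≠ 0 := by linarith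
  rw [hsplit] at hFTC
  field_simp
  linear_combination -hFTC

theorem hasDerivAt_ellF_param (u : ℝ) (hk0 : k ≠ 0) (hk : k ^ 2 < 1) :
    HasDerivAt (fun m => ellF u m)
      ((ellE u k - (1 - k ^ 2) * ellF u k) / (k * (1 - k ^ 2))
        - k * sin u * cos u / ((1 - k ^ 2) * Δ(k, u))) k := by
  refine (hasDerivAt_intervalIntegral_of_continuousOn_deriv (a := 0) (b := u)
    (F := fun m t => 1 / Δ(m, t)) (F' := fun m t => m * sin t ^ 2 / Δ(m, t) ^ 3)
    isOpen_sq_lt_one hk (fun _ hm => (continuous_inv_delta hm).continuousOn)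
    (ContinuousOn.div (by fun_prop) (by fun_prop) fun p hp =>
      pow_ne_zero 3 (delta_ne_zero hp.1 p.2))
    fun m hm t _ => hasDerivAt_inv_delta_param hm t).congr_deriv ?_
  have hsplit : ∫ t in (0 : ℝ)..u, k * sin t ^ 2 / Δ(k, t) ^ 3
      = ((∫ t in (0 : ℝ)..u, 1 / Δ(k, t) ^ 3) - ellF u k) / k := by
    rw [ellF, ← integral_sub ((continuous_inv_delta_cube hk).intervalIntegrable _ _)
      ((continuous_inv_delta hk).intervalIntegrable _ _), ← intervalIntegral.integral_div]
    refine integral_congr fun t _ => ?_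
    have hΔ := delta_pos hk t
    field_simp
    linear_combination delta_sq hk t
  have hk' : 1 - k ^ 2 ≠ 0 := by linarith
  rw [hsplit, integral_inv_delta_cube u hk]
  field_simp
  ring

theorem hasDerivAt_fu_param (u : ℝ) (hk0 : k ≠ 0) (hk : k ^ 2 < 1) :
    HasDerivAt (fun m => fu u m)
      (-(k ^ 2 * sin u * Δ(k, u) + cos u * ((1 - 2 * k ^ 2) * ellE u k - (1 - k ^ 2) * ellF u k))
        / (k * (1 - k ^ 2))) k := by
  refine (((hasDerivAt_delta_param hk u).const_mul (sin u)).sub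
    ((((hasDerivAt_ellE_param u hk0 hk).const_mul 2).sub
      (hasDerivAt_ellF_param u hk0 hk)).const_mul (cos u))).congr_deriv ?_
  have h2 := delta_sq hk u
  have hΔ := delta_pos hk u
  have hk' : 1 - k ^ 2 ≠ 0 := by linarith
  set Δu := Δ(k, u)
  field_simp
  linear_combination sin u * k ^ 2 * (h2 - cos_sq' u)

lemma ellF_pos {u : ℝ} (hu : 0 < u) (hk : k ^ 2 < 1) : 0 < ellF u k :=
  intervalIntegral_pos_of_pos_on ((continuous_inv_delta hk).intervalIntegrable _ _)
    (fun t _ => one_div_pos.2 (delta_pos hk t)) hu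

end

/-- For `k ∈ (0,1)` and `u ∈ (π/2, π)` with `f_u(u,k) = 0`, the partial
derivative `∂f_u/∂k` equals
`−(√(1 − k² sin²u)·sin u − cos u·F(u,k)) / (2k(1 − k²))` and is strictly
negative. -/
theorem fu_partial_k
    (k : ℝ) (hk : k ∈ Set.Ioo (0:ℝ) 1)
    (u : ℝ) (hu : u ∈ Set.Ioo (Real.pi / 2) Real.pi)
    (hzero : fu u k = 0) :
    HasDerivAt (fun m => fu u m)
      (-((Real.sqrt (1 - k ^ 2 * Real.sin u ^ 2) * Real.sin u
          - Real.cos u * ellF u k) / (2 * k * (1 - k ^ 2)))) k ∧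
    -((Real.sqrt (1 - k ^ 2 * Real.sin u ^ 2) * Real.sin u
        - Real.cos u * ellF u k) / (2 * k * (1 - k ^ 2))) < 0 := by
  obtain ⟨hk0, hk1⟩ := hk
  obtain ⟨hu1, hu2⟩ := hu
  have hk2 : k ^ 2 < 1 := by nlinarith
  have hu0 : 0 < u := by linarith [pi_pos]
  have hsin : 0 < sin u := sin_pos_of_pos_of_lt_pi hu0 hu2
  have hcos : cos u < 0 := cos_neg_of_pi_div_two_lt_of_lt hu1 (by linarith)
  have hnum : 0 < Δ(k, u) * sin u - cos u * ellF u k := by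
    nlinarith [delta_pos hk2 u, ellF_pos hu0 hk2]
  have h1k : 0 < 1 - k ^ 2 := by linarith
  have hden : 0 < 2 * k * (1 - k ^ 2) := by positivity
  refine ⟨(hasDerivAt_fu_param u hk0.ne' hk2).congr_deriv ?_, neg_lt_zero.2 (div_pos hnum hden)⟩
  unfold fu at hzero
  field_simp
  linear_combination (1 - 2 * k ^ 2) * hzero
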